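/- arXiv:2209.04139 — 5 statements merged into one kernel-verified Lean document; each statement's English description precedes it below -/
import Mathlib

section
/- For a matrix X ∈ Mat(2n,ℂ), e^{tX} is an 𝓘-contraction (i.e., 𝓘 − (e^{tX})* 𝓘 e^{tX} ≥ 0) for all t > 0 if and only if Re⟨v, 𝓘 X v⟩ ≤ 0 for all v ∈ ℂ^{2n}. -/
/-!
Along the orbit `u ↦ e^{uX} v` the form `g(u) = Re⟨e^{uX} v, 𝓘 e^{uX} v⟩` has derivative
`2 Re⟨e^{uX} v, 𝓘 X e^{uX} v⟩`, and the contraction property at time `t` says exactly that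
`g(t) ≤ g(0)` for every `v`. If `X` is dissipative, `g' ≤ 0` everywhere, so `g` is antitone.
Conversely, if `g(t) ≤ g(0)` for all `t > 0`, then `g` is maximal on `[0, ∞)` at `0`, so
`g'(0) = 2 Re⟨v, 𝓘 X v⟩ ≤ 0`.
-/

open Matrix NormedSpace
open scoped ComplexOrder

lemma HasDerivAt.nonpos_of_isMaxOn_Ici {g : ℝ → ℝ} {g' a : ℝ} (hg : HasDerivAt g g' a)
    (hmax : IsMaxOn g (Set.Ici a) a) : g' ≤ 0 := by
  have hcone : (1 : ℝ) ∈ posTangentConeAt (Set.Ici a) a :=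
    mem_posTangentConeAt_of_segment_subset (by simp [segment_eq_Icc, Set.Icc_subset_Ici_self])
  simpa using hmax.localize.hasFDerivWithinAt_nonpos hg.hasDerivWithinAt.hasFDerivWithinAt hcone

section MatrixNorm

attribute [local instance] Matrix.linftyOpNormedAddCommGroup Matrix.linftyOpNormedSpace
  Matrix.linftyOpNormedRing Matrix.linftyOpNormedAlgebra

variable {m : Type*} [Fintype m]

lemma HasDerivAt.re_star_dotProduct_mulVec {M : ℝ → Matrix m m ℂ} {M' : Matrix m m ℂ} {t : ℝ}
    (hM : HasDerivAt M M' t) (v : m → ℂ) :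
    HasDerivAt (fun u => (star v ⬝ᵥ (M u *ᵥ v)).re) (star v ⬝ᵥ (M' *ᵥ v)).re t := by
  let L : Matrix m m ℂ →ₗ[ℝ] ℝ :=
    { toFun := fun A => (star v ⬝ᵥ (A *ᵥ v)).re
      map_add' := fun A B => by simp [add_mulVec, dotProduct_add]
      map_smul' := fun r A => by simp [smul_mulVec, dotProduct_smul] }
  exact HasFDerivAt.comp_hasDerivAt (f := M) t L.toContinuousLinearMap.hasFDerivAt hM

variable [DecidableEq m]

lemma Matrix.hasDerivAt_exp_ofReal_smul (X : Matrix m m ℂ) (t : ℝ) :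
    HasDerivAt (fun u : ℝ => exp ((u : ℂ) • X)) (exp ((t : ℂ) • X) * X) t := by
  simp only [Complex.coe_smul]
  exact hasDerivAt_exp_smul_const X t

lemma Matrix.conjTranspose_exp_ofReal_smul (X : Matrix m m ℂ) (u : ℝ) :
    (exp ((u : ℂ) • X))ᴴ = exp ((u : ℂ) • Xᴴ) := by
  rw [← exp_conjTranspose, conjTranspose_smul, Complex.star_def, Complex.conj_ofReal]

lemma Matrix.hasDerivAt_conjTranspose_exp_mul_mul_exp (J X : Matrix m m ℂ) (t : ℝ) :
    HasDerivAt (fun u : ℝ => (exp ((u : ℂ) • X))ᴴ * J * exp ((u : ℂ) • X))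
      ((exp ((t : ℂ) • X))ᴴ * (Xᴴ * J + J * X) * exp ((t : ℂ) • X)) t := by
  have h := ((hasDerivAt_exp_ofReal_smul Xᴴ t).mul_const J).mul (hasDerivAt_exp_ofReal_smul X t)
  simp only [← conjTranspose_exp_ofReal_smul] at h
  refine h.congr_deriv ?_
  rw [((Commute.refl X).smul_left (t : ℂ)).exp_left.eq]
  noncomm_ring

end MatrixNorm

namespace Matrix

variable {m : Type*} [Fintype m]

lemma posSemidef_sub_iff_re_le {A B : Matrix m m ℂ} (hA : A.IsHermitian) (hB : B.IsHermitian) :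
    (A - B).PosSemidef ↔ ∀ v, (star v ⬝ᵥ (B *ᵥ v)).re ≤ (star v ⬝ᵥ (A *ᵥ v)).re := by
  simp only [← sub_nonneg (b := (star _ ⬝ᵥ (B *ᵥ _)).re), ← Complex.sub_re, ← dotProduct_sub,
    ← sub_mulVec]
  refine ⟨fun h v => h.re_dotProduct_nonneg v, fun h => ?_⟩
  exact .of_dotProduct_mulVec_nonneg (hA.sub hB) fun v => Complex.nonneg_iff.mpr
    ⟨h v, ((hA.sub hB).im_star_dotProduct_mulVec_self v).symm⟩

lemma star_dotProduct_conjTranspose_mul_mul_mulVec (E B : Matrix m m ℂ) (v : m → ℂ) :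
    star v ⬝ᵥ ((Eᴴ * B * E) *ᵥ v) = star (E *ᵥ v) ⬝ᵥ (B *ᵥ (E *ᵥ v)) := by
  simp only [star_mulVec, ← dotProduct_mulVec, mulVec_mulVec, ← mul_assoc]

lemma re_star_dotProduct_conjTranspose_mul_add {J : Matrix m m ℂ} (hJ : J.IsHermitian)
    (X : Matrix m m ℂ) (w : m → ℂ) :
    (star w ⬝ᵥ ((Xᴴ * J + J * X) *ᵥ w)).re = 2 * (star w ⬝ᵥ (J *ᵥ (X *ᵥ w))).re := by
  have hstar : star (star w ⬝ᵥ ((J * X) *ᵥ w)) = star w ⬝ᵥ ((Xᴴ * J) *ᵥ w) := by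
    rw [star_dotProduct, star_star, star_mulVec, ← dotProduct_mulVec, conjTranspose_mul, hJ.eq]
  rw [add_mulVec, dotProduct_add, Complex.add_re, ← hstar, Complex.star_def, Complex.conj_re,
    ← mulVec_mulVec, two_mul]

variable [DecidableEq m]

noncomputable def formAlongExp (J X : Matrix m m ℂ) (v : m → ℂ) (u : ℝ) : ℝ :=
  (star v ⬝ᵥ (((exp ((u : ℂ) • X))ᴴ * J * exp ((u : ℂ) • X)) *ᵥ v)).re

lemma formAlongExp_zero (J X : Matrix m m ℂ) (v : m → ℂ) :
    formAlongExp J X v 0 = (star v ⬝ᵥ (J *ᵥ v)).re := by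
  simp [formAlongExp]

lemma hasDerivAt_formAlongExp {J : Matrix m m ℂ} (hJ : J.IsHermitian) (X : Matrix m m ℂ)
    (v : m → ℂ) (t : ℝ) :
    HasDerivAt (formAlongExp J X v)
      (2 * (star (exp ((t : ℂ) • X) *ᵥ v) ⬝ᵥ (J *ᵥ (X *ᵥ (exp ((t : ℂ) • X) *ᵥ v)))).re) t := by
  have h := (hasDerivAt_conjTranspose_exp_mul_mul_exp J X t).re_star_dotProduct_mulVec v
  rwa [star_dotProduct_conjTranspose_mul_mul_mulVec,
    re_star_dotProduct_conjTranspose_mul_add hJ] at h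

lemma posSemidef_sub_exp_iff {J : Matrix m m ℂ} (hJ : J.IsHermitian) (X : Matrix m m ℂ) (t : ℝ) :
    (J - (exp ((t : ℂ) • X))ᴴ * J * exp ((t : ℂ) • X)).PosSemidef ↔
      ∀ v, formAlongExp J X v t ≤ formAlongExp J X v 0 := by
  rw [posSemidef_sub_iff_re_le hJ (isHermitian_conjTranspose_mul_mul _ hJ)]
  simp only [formAlongExp_zero]
  rfl

lemma antitone_formAlongExp {J : Matrix m m ℂ} (hJ : J.IsHermitian) {X : Matrix m m ℂ}
    (hX : ∀ v, (star v ⬝ᵥ (J *ᵥ (X *ᵥ v))).re ≤ 0) (v : m → ℂ) :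
    Antitone (formAlongExp J X v) :=
  antitone_of_hasDerivAt_nonpos (hasDerivAt_formAlongExp hJ X v) fun _ =>
    mul_nonpos_of_nonneg_of_nonpos zero_le_two (hX _)

theorem forall_posSemidef_sub_exp_iff {J : Matrix m m ℂ} (hJ : J.IsHermitian)
    (X : Matrix m m ℂ) :
    (∀ t : ℝ, 0 < t → (J - (exp ((t : ℂ) • X))ᴴ * J * exp ((t : ℂ) • X)).PosSemidef) ↔
      ∀ v, (star v ⬝ᵥ (J *ᵥ (X *ᵥ v))).re ≤ 0 := by
  simp only [posSemidef_sub_exp_iff hJ]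
  refine ⟨fun h v => ?_, fun hX t ht v => antitone_formAlongExp hJ hX v ht.le⟩
  have hmax : IsMaxOn (formAlongExp J X v) (Set.Ici 0) 0 := by
    refine isMaxOn_iff.mpr fun t (ht : 0 ≤ t) => ?_
    rcases ht.eq_or_lt with rfl | hpos
    exacts [le_rfl, h t hpos v]
  have hderiv := (hasDerivAt_formAlongExp hJ X v 0).nonpos_of_isMaxOn_Ici hmax
  simp only [Complex.ofReal_zero, zero_smul, exp_zero, one_mulVec] at hderiv
  linarith

end Matrix

/-- For `X ∈ Mat(2n,ℂ)`, `e^{tX}` is an `𝓘`-contraction for all `t > 0`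
iff `Re⟨v, 𝓘 X v⟩ ≤ 0` for all `v ∈ ℂ^{2n}`. -/
theorem stmt0 (n : ℕ) (X : Matrix (Fin n ⊕ Fin n) (Fin n ⊕ Fin n) ℂ)
    (I' : Matrix (Fin n ⊕ Fin n) (Fin n ⊕ Fin n) ℂ)
    (hI : I' = Matrix.fromBlocks (-1) 0 0 1) :
    (∀ t : ℝ, 0 < t →
        (I' - (NormedSpace.exp ((t : ℂ) • X))ᴴ * I' * NormedSpace.exp ((t : ℂ) • X)).PosSemidef) ↔
      (∀ v : Fin n ⊕ Fin n → ℂ, (star v ⬝ᵥ (I' *ᵥ (X *ᵥ v))).re ≤ 0) := by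
  subst hI
  exact forall_posSemidef_sub_exp_iff (by simp [IsHermitian, fromBlocks_conjTranspose]) X
end

section
/- For X ∈ 𝔰𝔭(2n,ℂ) with 𝓘 X ≤ 0 (i.e., X is 𝓘-self-adjoint dissipative), e^{X} lies in ΓSp_c(2n) := Sp(2n,ℂ) ∩ ΓU(n,n). -/
/-!
The relation `𝓙X + Xᵀ𝓙 = 0` says `Xᵀ = 𝓙 (-X) 𝓙⁻¹`, hence `(e^X)ᵀ = 𝓙 e^{-X} 𝓙⁻¹`, which is the
symplectic identity. Since `𝓘X` is Hermitian, `Xᴴ𝓘 + 𝓘X = 2𝓘X ≤ 0`, so the derivative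
`(e^{tX})ᴴ (Xᴴ𝓘 + 𝓘X) e^{tX}` of `t ↦ (e^{tX})ᴴ 𝓘 e^{tX}` is negative semidefinite and this
Hermitian form decreases from `𝓘` at `t = 0` to `(e^X)ᴴ 𝓘 e^X` at `t = 1`.
-/

open Matrix NormedSpace
open scoped ComplexOrder

attribute [local instance] Matrix.linftyOpNormedRing Matrix.linftyOpNormedAlgebra

namespace Matrix

variable {m 𝕜 : Type*} [Fintype m] [DecidableEq m] [RCLike 𝕜]

theorem fromBlocks_zero_one_neg_one_zero_mul_self {R : Type*} [Ring R] :
    fromBlocks 0 1 (-1) 0 * fromBlocks 0 1 (-1) 0 = (-1 : Matrix (m ⊕ m) (m ⊕ m) R) := by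
  simp [fromBlocks_multiply, ← fromBlocks_one, fromBlocks_neg]

theorem transpose_exp_mul_mul_exp_eq_self {J X : Matrix m m 𝕜} (hJ : IsUnit J)
    (hX : J * X + Xᵀ * J = 0) : (exp X)ᵀ * J * exp X = J := by
  have hdet := (isUnit_iff_isUnit_det J).1 hJ
  have hXT : Xᵀ = J * -X * J⁻¹ := by
    rw [← mul_nonsing_inv_cancel_right J Xᵀ hdet, eq_neg_of_add_eq_zero_right hX, mul_neg,
      neg_mul]
  rw [← exp_transpose, hXT, exp_conj J (-X) hJ, exp_neg, nonsing_inv_mul_cancel_right _ _ hdet,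
    nonsing_inv_mul_cancel_right _ _ ((isUnit_iff_isUnit_det _).1 (isUnit_exp X))]

omit [DecidableEq m] in
theorem IsHermitian.posSemidef_of_re_dotProduct_mulVec_nonneg {A : Matrix m m 𝕜}
    (hA : A.IsHermitian) (h : ∀ x, 0 ≤ RCLike.re (star x ⬝ᵥ (A *ᵥ x))) : A.PosSemidef :=
  .of_dotProduct_mulVec_nonneg hA fun x ↦
    RCLike.nonneg_iff.2 ⟨h x, hA.im_star_dotProduct_mulVec_self x⟩

theorem conjTranspose_exp_real_smul (X : Matrix m m 𝕜) (s : ℝ) :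
    (exp (s • X))ᴴ = exp (s • Xᴴ) := by
  rw [← exp_conjTranspose, conjTranspose_smul, star_trivial]

theorem hasDerivAt_re_star_dotProduct_conjTranspose_exp_mul_mul_exp (M X : Matrix m m 𝕜)
    (x : m → 𝕜) (t : ℝ) :
    HasDerivAt (fun s : ℝ ↦ RCLike.re (star x ⬝ᵥ (((exp (s • X))ᴴ * M * exp (s • X)) *ᵥ x)))
      (RCLike.re (star x ⬝ᵥ (((exp (t • X))ᴴ * (Xᴴ * M + M * X) * exp (t • X)) *ᵥ x))) t := by
  let q : Matrix m m 𝕜 →ₗ[ℝ] ℝ :=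
    { toFun := fun A ↦ RCLike.re (star x ⬝ᵥ (A *ᵥ x))
      map_add' := fun A B ↦ by simp only [add_mulVec, dotProduct_add, map_add]
      map_smul' := fun c A ↦ by simp [smul_mulVec, RCLike.smul_re] }
  have hexp := ((hasDerivAt_exp_smul_const Xᴴ t).mul_const M).mul (hasDerivAt_exp_smul_const' X t)
  have hq := (LinearMap.toContinuousLinearMap q).hasFDerivAt.comp_hasDerivAt t hexp
  simp only [conjTranspose_exp_real_smul]
  refine hq.congr_deriv ?_
  simp only [mul_add, add_mul, mul_assoc]
  rfl

theorem posSemidef_sub_conjTranspose_exp_mul_mul_exp {M X : Matrix m m 𝕜} (hM : M.IsHermitian)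
    (hX : (-(Xᴴ * M + M * X)).PosSemidef) : (M - (exp X)ᴴ * M * exp X).PosSemidef := by
  refine (hM.sub (isHermitian_conjTranspose_mul_mul _ hM)).posSemidef_of_re_dotProduct_mulVec_nonneg
    fun x ↦ ?_
  have hderiv_nonpos (t : ℝ) :
      RCLike.re (star x ⬝ᵥ (((exp (t • X))ᴴ * (Xᴴ * M + M * X) * exp (t • X)) *ᵥ x)) ≤ 0 := by
    have hneg := (hX.conjTranspose_mul_mul_same (exp (t • X))).re_dotProduct_nonneg x
    rwa [mul_neg, neg_mul, neg_mulVec, dotProduct_neg, map_neg, neg_nonneg] at hneg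
  have hanti := antitone_of_hasDerivAt_nonpos
    (hasDerivAt_re_star_dotProduct_conjTranspose_exp_mul_mul_exp M X x) hderiv_nonpos
  have hle := hanti zero_le_one
  simp only [zero_smul, exp_zero, one_smul, conjTranspose_one, one_mul, mul_one] at hle
  simpa [sub_mulVec, dotProduct_sub] using hle

end Matrix

/-- If `X ∈ 𝔰𝔭(2n,ℂ)` is `𝓘`-self-adjoint dissipative (`𝓘X ≤ 0`), then
`e^X ∈ ΓSp_c(2n) = Sp(2n,ℂ) ∩ ΓU(n,n)`. -/
theorem stmt2 (n : ℕ) (I' J X : Matrix (Fin n ⊕ Fin n) (Fin n ⊕ Fin n) ℂ)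
    (hI : I' = Matrix.fromBlocks (-1) 0 0 1)
    (hJ : J = Matrix.fromBlocks 0 1 (-1) 0)
    (hsp : J * X + Xᵀ * J = 0)
    (hdiss : (-(I' * X)).PosSemidef) :
    (exp X)ᵀ * J * exp X = J ∧ (I' - (exp X)ᴴ * I' * exp X).PosSemidef := by
  have hJunit : IsUnit J :=
    .of_mul_eq_one (-J) (by rw [mul_neg, hJ, fromBlocks_zero_one_neg_one_zero_mul_self, neg_neg])
  have hIherm : I'.IsHermitian := by
    simp [hI, IsHermitian, fromBlocks_conjTranspose]
  have hIXherm : (I' * X).IsHermitian := by simpa using hdiss.isHermitian.neg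
  have hXI : Xᴴ * I' = I' * X := by
    rw [← hIXherm.eq, conjTranspose_mul, hIherm.eq]
  have hlyap : -(Xᴴ * I' + I' * X) = -(I' * X) + -(I' * X) := by rw [hXI, neg_add]
  exact ⟨transpose_exp_mul_mul_exp_eq_self hJunit hsp,
    posSemidef_sub_conjTranspose_exp_mul_mul_exp hIherm (hlyap ▸ hdiss.add hdiss)⟩
end

section
/- Let P₁, P₂ be 2n-dimensional subspaces of ℂ^{2n} ⊕ ℂ^{2n} whose Potapov transforms are graphs of matrices Π(P₁) = [[α,β],[γ,δ]] and Π(P₂) = [[φ,ψ],[θ,ϰ]] with ‖δ‖, ‖φ‖ < 1. Then the composed subspace P₁P₂ has Potapov transform Π(P₁P₂) = [[α + β(1−φδ)^{−1}φγ, β(1−φδ)^{−1}ψ],[θ(1−δφ)^{−1}γ, ϰ + θδ(1−φδ)^{−1}ψ]]. -/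
open Matrix
open scoped Matrix.Norms.L2Operator

/-- The Potapov swap map `Π`, `(v₋⊕v₊)⊕(w₋⊕w₊) ↦ (v₋⊕w₊)⊕(v₊⊕w₋)`. -/
def potapovSwap (n : ℕ) :
    ((Fin n ⊕ Fin n → ℂ) × (Fin n ⊕ Fin n → ℂ)) →
      ((Fin n ⊕ Fin n → ℂ) × (Fin n ⊕ Fin n → ℂ)) :=
  fun p =>
    (Sum.elim (fun j => p.1 (Sum.inl j)) (fun j => p.2 (Sum.inr j)),
     Sum.elim (fun j => p.1 (Sum.inr j)) (fun j => p.2 (Sum.inl j)))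

/-- The graph of a matrix `T`, as a set of pairs. -/
def mGraph (n : ℕ) (T : Matrix (Fin n ⊕ Fin n) (Fin n ⊕ Fin n) ℂ) :
    Set ((Fin n ⊕ Fin n → ℂ) × (Fin n ⊕ Fin n → ℂ)) :=
  {p | p.2 = T *ᵥ p.1}

/-!
Write `x = x₋ ⊕ x₊`. By definition of `Π`, `(x, y) ∈ P₁` says `x₊ = α x₋ + β w₊` and
`w₋ = γ x₋ + δ w₊`, and `(w, y) ∈ P₂` says `w₊ = φ w₋ + ψ y₊` and `y₋ = θ w₋ + ϰ y₊`.
Eliminating the internal signal `w` gives `(1 - φδ) w₊ = φγ x₋ + ψ y₊`, which has the unique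
solution `w₊ = (1 - φδ)⁻¹ (φγ x₋ + ψ y₊)` because `‖φδ‖ < 1`; substituting back, together with
the push-through identity `(1 - δφ)⁻¹ = 1 + δ(1 - φδ)⁻¹φ`, yields the stated block matrix.
-/

section Cascade

variable {m R : Type*} [Fintype m] [DecidableEq m] [CommRing R]

theorem Matrix.eq_inv_mulVec_iff_mulVec_eq {E : Matrix m m R} (hE : IsUnit E.det) {v w : m → R} :
    w = E⁻¹ *ᵥ v ↔ E *ᵥ w = v := by
  constructor
  · rintro rfl
    rw [mulVec_mulVec, mul_nonsing_inv _ hE, one_mulVec]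
  · rintro rfl
    rw [mulVec_mulVec, nonsing_inv_mul _ hE, one_mulVec]

theorem Matrix.inv_one_sub_mul_comm {φ δ : Matrix m m R} (hE : IsUnit (1 - φ * δ).det) :
    (1 - δ * φ)⁻¹ = 1 + δ * (1 - φ * δ)⁻¹ * φ := by
  apply inv_eq_right_inv
  calc (1 - δ * φ) * (1 + δ * (1 - φ * δ)⁻¹ * φ)
      = 1 - δ * φ + δ * ((1 - φ * δ) * (1 - φ * δ)⁻¹) * φ := by noncomm_ring
    _ = 1 := by rw [mul_nonsing_inv _ hE]; noncomm_ring

theorem Matrix.exists_cascade_iff {α β γ δ φ ψ θ ϰ : Matrix m m R} (hE : IsUnit (1 - φ * δ).det)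
    (a b c d : m → R) :
    (∃ u v : m → R, (b = α *ᵥ a + β *ᵥ v ∧ u = γ *ᵥ a + δ *ᵥ v) ∧
        (v = φ *ᵥ u + ψ *ᵥ d ∧ c = θ *ᵥ u + ϰ *ᵥ d)) ↔
      b = (α + β * (1 - φ * δ)⁻¹ * φ * γ) *ᵥ a + (β * (1 - φ * δ)⁻¹ * ψ) *ᵥ d ∧
      c = (θ * (1 - δ * φ)⁻¹ * γ) *ᵥ a + (ϰ + θ * δ * (1 - φ * δ)⁻¹ * ψ) *ᵥ d := by
  set v₀ := (1 - φ * δ)⁻¹ *ᵥ (φ *ᵥ γ *ᵥ a + ψ *ᵥ d)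
  have hfix : ∀ v, v = φ *ᵥ (γ *ᵥ a + δ *ᵥ v) + ψ *ᵥ d ↔ v = v₀ := by
    intro v
    rw [show v₀ = _ from rfl, eq_inv_mulVec_iff_mulVec_eq hE, sub_mulVec, one_mulVec]
    simp only [mulVec_add, mulVec_mulVec]
    constructor <;> intro h <;> linear_combination h
  have hb : α *ᵥ a + β *ᵥ v₀ =
      (α + β * (1 - φ * δ)⁻¹ * φ * γ) *ᵥ a + (β * (1 - φ * δ)⁻¹ * ψ) *ᵥ d := by
    simp only [v₀, mulVec_add, add_mulVec, mulVec_mulVec, Matrix.mul_assoc]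
    abel
  have hc : θ *ᵥ (γ *ᵥ a + δ *ᵥ v₀) + ϰ *ᵥ d =
      (θ * (1 - δ * φ)⁻¹ * γ) *ᵥ a + (ϰ + θ * δ * (1 - φ * δ)⁻¹ * ψ) *ᵥ d := by
    simp only [v₀, inv_one_sub_mul_comm hE, mulVec_add, add_mulVec, mulVec_mulVec, Matrix.mul_add,
      Matrix.add_mul, Matrix.mul_one, Matrix.mul_assoc]
    abel
  constructor
  · rintro ⟨u, v, ⟨hb', rfl⟩, hv, hc'⟩
    obtain rfl := (hfix v).1 hv
    exact ⟨hb'.trans hb, hc'.trans hc⟩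
  · rintro ⟨hb', hc'⟩
    exact ⟨_, v₀, ⟨hb'.trans hb.symm, rfl⟩, (hfix v₀).2 rfl, hc'.trans hc.symm⟩

end Cascade

section Potapov

variable {n : ℕ}

theorem potapovSwap_bijective : Function.Bijective (potapovSwap n) :=
  Function.bijective_iff_has_inverse.2
    ⟨fun q => (Sum.elim (q.1 ∘ Sum.inl) (q.2 ∘ Sum.inl), Sum.elim (q.2 ∘ Sum.inr) (q.1 ∘ Sum.inr)),
      fun _ => by ext (_ | _) <;> rfl, fun _ => by ext (_ | _) <;> rfl⟩

theorem potapovSwap_image_eq_iff {S G : Set ((Fin n ⊕ Fin n → ℂ) × (Fin n ⊕ Fin n → ℂ))} :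
    potapovSwap n '' S = G ↔ ∀ p, p ∈ S ↔ potapovSwap n p ∈ G := by
  rw [eq_comm, ← Set.preimage_eq_iff_eq_image potapovSwap_bijective, Set.ext_iff]
  exact forall_congr' fun _ => Iff.comm

theorem potapovSwap_mem_mGraph_fromBlocks_iff {A B C D : Matrix (Fin n) (Fin n) ℂ}
    {x y : Fin n ⊕ Fin n → ℂ} :
    potapovSwap n (x, y) ∈ mGraph n (fromBlocks A B C D) ↔
      x ∘ Sum.inr = A *ᵥ (x ∘ Sum.inl) + B *ᵥ (y ∘ Sum.inr) ∧
      y ∘ Sum.inl = C *ᵥ (x ∘ Sum.inl) + D *ᵥ (y ∘ Sum.inr) := by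
  rw [mGraph, Set.mem_ofPred_eq, fromBlocks_mulVec]
  exact Sum.elim_eq_iff

theorem mem_iff_of_potapovSwap_image_eq {A B C D : Matrix (Fin n) (Fin n) ℂ}
    {P : Set ((Fin n ⊕ Fin n → ℂ) × (Fin n ⊕ Fin n → ℂ))}
    (hP : potapovSwap n '' P = mGraph n (fromBlocks A B C D)) {x y : Fin n ⊕ Fin n → ℂ} :
    (x, y) ∈ P ↔
      x ∘ Sum.inr = A *ᵥ (x ∘ Sum.inl) + B *ᵥ (y ∘ Sum.inr) ∧
      y ∘ Sum.inl = C *ᵥ (x ∘ Sum.inl) + D *ᵥ (y ∘ Sum.inr) :=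
  (potapovSwap_image_eq_iff.1 hP (x, y)).trans potapovSwap_mem_mGraph_fromBlocks_iff

end Potapov

theorem stmt11_general (n : ℕ)
    (P₁ P₂ : Submodule ℂ ((Fin n ⊕ Fin n → ℂ) × (Fin n ⊕ Fin n → ℂ)))
    (α β γ δ φ ψ θ ϰ : Matrix (Fin n) (Fin n) ℂ)
    (hP₁ : potapovSwap n '' (P₁ : Set _) = mGraph n (Matrix.fromBlocks α β γ δ))
    (hP₂ : potapovSwap n '' (P₂ : Set _) = mGraph n (Matrix.fromBlocks φ ψ θ ϰ))
    (hδ : ‖δ‖ < 1) (hφ : ‖φ‖ < 1) :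
    potapovSwap n ''
        {p : (Fin n ⊕ Fin n → ℂ) × (Fin n ⊕ Fin n → ℂ) |
          ∃ w : Fin n ⊕ Fin n → ℂ, (p.1, w) ∈ P₁ ∧ (w, p.2) ∈ P₂} =
      mGraph n (Matrix.fromBlocks
        (α + β * (1 - φ * δ)⁻¹ * φ * γ) (β * (1 - φ * δ)⁻¹ * ψ)
        (θ * (1 - δ * φ)⁻¹ * γ) (ϰ + θ * δ * (1 - φ * δ)⁻¹ * ψ)) := by
  have hE : IsUnit (1 - φ * δ).det := by
    rw [← isUnit_iff_isUnit_det]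
    refine isUnit_one_sub_of_norm_lt_one ((norm_mul_le φ δ).trans_lt ?_)
    exact mul_lt_one_of_nonneg_of_lt_one_left (norm_nonneg φ) hφ hδ.le
  refine potapovSwap_image_eq_iff.2 fun ⟨x, y⟩ => ?_
  rw [potapovSwap_mem_mGraph_fromBlocks_iff, ← exists_cascade_iff hE]
  simp only [Set.mem_ofPred_eq, ← SetLike.mem_coe, mem_iff_of_potapovSwap_image_eq hP₁,
    mem_iff_of_potapovSwap_image_eq hP₂]
  exact ⟨fun ⟨w, h₁, h₂⟩ => ⟨w ∘ Sum.inl, w ∘ Sum.inr, h₁, h₂⟩,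
    fun ⟨u, v, h₁, h₂⟩ => ⟨Sum.elim u v, h₁, h₂⟩⟩

/-- Composition formula for Potapov transforms: if `Π(P₁) = [[α,β],[γ,δ]]`,
`Π(P₂) = [[φ,ψ],[θ,ϰ]]` with `‖δ‖, ‖φ‖ < 1`, then
`Π(P₁P₂) = [[α + β(1−φδ)⁻¹φγ, β(1−φδ)⁻¹ψ],[θ(1−δφ)⁻¹γ, ϰ + θδ(1−φδ)⁻¹ψ]]`. -/
theorem stmt11 (n : ℕ)
    (P₁ P₂ : Submodule ℂ ((Fin n ⊕ Fin n → ℂ) × (Fin n ⊕ Fin n → ℂ)))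
    (h₁ : Module.finrank ℂ P₁ = 2 * n) (h₂ : Module.finrank ℂ P₂ = 2 * n)
    (α β γ δ φ ψ θ ϰ : Matrix (Fin n) (Fin n) ℂ)
    (hP₁ : potapovSwap n '' (P₁ : Set _) = mGraph n (Matrix.fromBlocks α β γ δ))
    (hP₂ : potapovSwap n '' (P₂ : Set _) = mGraph n (Matrix.fromBlocks φ ψ θ ϰ))
    (hδ : ‖δ‖ < 1) (hφ : ‖φ‖ < 1) :
    potapovSwap n ''
        {p : (Fin n ⊕ Fin n → ℂ) × (Fin n ⊕ Fin n → ℂ) |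
          ∃ w : Fin n ⊕ Fin n → ℂ, (p.1, w) ∈ P₁ ∧ (w, p.2) ∈ P₂} =
      mGraph n (Matrix.fromBlocks
        (α + β * (1 - φ * δ)⁻¹ * φ * γ) (β * (1 - φ * δ)⁻¹ * ψ)
        (θ * (1 - δ * φ)⁻¹ * γ) (ϰ + θ * δ * (1 - φ * δ)⁻¹ * ψ)) :=
  stmt11_general n P₁ P₂ α β γ δ φ ψ θ ϰ hP₁ hP₂ hδ hφ
end

section
/- Π(U(n,n)) consists of unitary 2n×2n matrices [[α,β],[γ,δ]] with det β ≠ 0; moreover, for a unitary block matrix [[α,β],[γ,δ]], the conditions det β ≠ 0, det γ ≠ 0, ‖α‖ < 1, and ‖δ‖ < 1 are all equivalent. -/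
/-! Write `g (x₁, x₂) = (y₁, y₂)` for `g = [[a, b], [c, d]]`. The Potapov transform is the exchange
map `(x₂, y₁) ↦ (x₁, y₂)`, i.e. `Π(g) = L K⁻¹` with `K = [[0, 1], [a, b]]` and
`L = [[1, 0], [c, d]]`. The identity `KᴴK + gᴴ𝓘g = LᴴL + 𝓘` says that `g` preserves the form
`-|x₁|² + |x₂|²` exactly when `|x₁|² + |y₂|² = |x₂|² + |y₁|²`, i.e. when `Π(g)` is unitary; the
`(1,1)` block of `gᴴ𝓘g = 𝓘` reads `aᴴa = 1 + cᴴc`, so `a` is invertible. Conversely a unitary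
`r = [[α, β], [γ, δ]]` with `β` invertible is `Π` of the `g` determined by `r K = L`.

For the second part, a relation `XᴴX + YᴴY = 1` between blocks of a unitary matrix gives
`‖Xv‖² + ‖Yv‖² = ‖v‖²`; hence `‖X‖ < 1` iff `Y` is injective, the gap `‖v‖ - ‖Xv‖` being uniform
on the unit sphere because `Y` is then bounded below. -/

open Matrix
open scoped Matrix.Norms.L2Operator

theorem star_mul_mul_self_of_star_mul_self_eq_one {R : Type*} [Monoid R] [StarMul R] {r : R}
    (hr : star r * r = 1) (k : R) : star (r * k) * (r * k) = star k * k := by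
  rw [star_mul, mul_assoc, ← mul_assoc (star r), hr, one_mul]

theorem star_mul_mul_self_eq_one_of_star_mul_self_eq {R : Type*} [Monoid R] [StarMul R]
    {k l k' : R} (h : star l * l = star k * k) (hk : k * k' = 1) :
    star (l * k') * (l * k') = 1 := by
  rw [star_mul, mul_assoc, ← mul_assoc (star l), h, mul_assoc, hk, mul_one, ← star_mul, hk,
    star_one]

namespace ContinuousLinearMap

variable {𝕜 E F G : Type*} [RCLike 𝕜]
  [NormedAddCommGroup E] [InnerProductSpace 𝕜 E] [CompleteSpace E]
  [NormedAddCommGroup F] [InnerProductSpace 𝕜 F] [CompleteSpace F]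
  [NormedAddCommGroup G] [InnerProductSpace 𝕜 G] [CompleteSpace G]
  {T : E →L[𝕜] F} {S : E →L[𝕜] G}

theorem norm_sq_add_norm_sq_of_adjoint_comp_add_adjoint_comp
    (h : (adjoint T).comp T + (adjoint S).comp S = 1) (x : E) :
    ‖T x‖ ^ 2 + ‖S x‖ ^ 2 = ‖x‖ ^ 2 := by
  rw [apply_norm_sq_eq_inner_adjoint_left, apply_norm_sq_eq_inner_adjoint_left, ← map_add,
    ← inner_add_left, ← _root_.add_apply, h, one_apply_eq_self,
    ← inner_self_eq_norm_sq (𝕜 := 𝕜)]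

theorem opNorm_lt_one_iff_injective_of_adjoint_comp_add_adjoint_comp [FiniteDimensional 𝕜 E]
    (h : (adjoint T).comp T + (adjoint S).comp S = 1) :
    ‖T‖ < 1 ↔ Function.Injective S := by
  have hsum := norm_sq_add_norm_sq_of_adjoint_comp_add_adjoint_comp h
  constructor
  · intro hT
    refine (injective_iff_map_eq_zero S).2 fun x hSx => norm_eq_zero.1 ?_
    have hTx : ‖T x‖ = ‖x‖ := by
      have := hsum x
      rw [hSx, norm_zero, zero_pow two_ne_zero, add_zero] at this
      exact (sq_eq_sq₀ (norm_nonneg _) (norm_nonneg _)).1 this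
    nlinarith [T.le_opNorm x, norm_nonneg x]
  · intro hS
    obtain ⟨K, hK₀, hanti⟩ := (S : E →ₗ[𝕜] G).injective_iff_antilipschitz.1 hS
    have hK : (0 : ℝ) < K := hK₀
    refine lt_of_le_of_lt (T.opNorm_le_bound (Real.sqrt_nonneg (1 - (K : ℝ)⁻¹ ^ 2)) fun x => ?_) ?_
    · have hSx : ‖x‖ * (K : ℝ)⁻¹ ≤ ‖S x‖ := by
        rw [mul_inv_le_iff₀ hK, mul_comm]
        exact S.bound_of_antilipschitz hanti x
      have hTx : ‖T x‖ ^ 2 ≤ (1 - (K : ℝ)⁻¹ ^ 2) * ‖x‖ ^ 2 := by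
        have := pow_le_pow_left₀ (by positivity) hSx 2
        rw [mul_pow] at this
        linarith [hsum x]
      calc ‖T x‖ = Real.sqrt (‖T x‖ ^ 2) := (Real.sqrt_sq (norm_nonneg _)).symm
        _ ≤ Real.sqrt ((1 - (K : ℝ)⁻¹ ^ 2) * ‖x‖ ^ 2) := Real.sqrt_le_sqrt hTx
        _ = Real.sqrt (1 - (K : ℝ)⁻¹ ^ 2) * ‖x‖ := by
          rw [Real.sqrt_mul' _ (by positivity), Real.sqrt_sq (norm_nonneg _)]
    · rw [Real.sqrt_lt' one_pos]
      have : (0 : ℝ) < (K : ℝ)⁻¹ ^ 2 := by positivity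
      linarith

end ContinuousLinearMap

namespace Matrix

section Potapov

variable {R : Type*} [CommRing R] {n : Type*} [Fintype n] [DecidableEq n]

noncomputable def potapov (a b c d : Matrix n n R) : Matrix (n ⊕ n) (n ⊕ n) R :=
  fromBlocks (-(a⁻¹ * b)) a⁻¹ (d - c * a⁻¹ * b) (c * a⁻¹)

theorem fromBlocks_zero_one_mul_eq_one {a : Matrix n n R} (ha : IsUnit a.det) (b : Matrix n n R) :
    fromBlocks 0 1 a b * fromBlocks (-(a⁻¹ * b)) a⁻¹ 1 0 = 1 := by
  rw [fromBlocks_multiply, ← fromBlocks_one]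
  congr 1 <;> simp [mul_nonsing_inv _ ha, ← Matrix.mul_assoc]

theorem fromBlocks_one_zero_mul (a b c d : Matrix n n R) :
    fromBlocks 1 0 c d * fromBlocks (-(a⁻¹ * b)) a⁻¹ 1 0 = potapov a b c d := by
  rw [fromBlocks_multiply, potapov]
  congr 1 <;> simp [← Matrix.mul_assoc, sub_eq_neg_add]

theorem potapov_eq_self_of_isUnit {α β γ δ : Matrix n n R} (hβ : IsUnit β.det) :
    potapov β⁻¹ (-(β⁻¹ * α)) (δ * β⁻¹) (γ - δ * β⁻¹ * α) = fromBlocks α β γ δ := by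
  rw [potapov, nonsing_inv_nonsing_inv _ hβ]
  congr 1 <;> simp [Matrix.mul_assoc, mul_nonsing_inv_cancel_left _ _ hβ, nonsing_inv_mul _ hβ]

theorem fromBlocks_mul_fromBlocks_zero_one {α β γ δ : Matrix n n R} (hβ : IsUnit β.det) :
    fromBlocks α β γ δ * fromBlocks 0 1 β⁻¹ (-(β⁻¹ * α)) =
      fromBlocks 1 0 (δ * β⁻¹) (γ - δ * β⁻¹ * α) := by
  rw [fromBlocks_multiply]
  congr 1 <;> simp [mul_nonsing_inv _ hβ, mul_nonsing_inv_cancel_left _ _ hβ, Matrix.mul_assoc,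
    sub_eq_add_neg]

variable [StarRing R]

theorem conjTranspose_mul_indefinite_mul_add (a b c d : Matrix n n R) :
    (fromBlocks 0 1 a b)ᴴ * fromBlocks 0 1 a b +
        (fromBlocks a b c d)ᴴ * fromBlocks (-1) 0 0 1 * fromBlocks a b c d =
      (fromBlocks 1 0 c d)ᴴ * fromBlocks 1 0 c d + fromBlocks (-1) 0 0 1 := by
  simp only [fromBlocks_conjTranspose, fromBlocks_multiply, fromBlocks_add]
  congr 1 <;> simp [add_comm]

theorem conjTranspose_mul_indefinite_mul_eq_iff (a b c d : Matrix n n R) :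
    (fromBlocks a b c d)ᴴ * fromBlocks (-1) 0 0 1 * fromBlocks a b c d = fromBlocks (-1) 0 0 1 ↔
      (fromBlocks 1 0 c d)ᴴ * fromBlocks 1 0 c d = (fromBlocks 0 1 a b)ᴴ * fromBlocks 0 1 a b := by
  rw [← add_right_inj ((fromBlocks 0 1 a b)ᴴ * fromBlocks 0 1 a b),
    conjTranspose_mul_indefinite_mul_add, add_left_inj]

theorem fromBlocks_conjTranspose_mul_self_eq_one_iff {α β γ δ : Matrix n n R} :
    (fromBlocks α β γ δ)ᴴ * fromBlocks α β γ δ = 1 ↔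
      αᴴ * α + γᴴ * γ = 1 ∧ αᴴ * β + γᴴ * δ = 0 ∧ βᴴ * α + δᴴ * γ = 0 ∧
        βᴴ * β + δᴴ * δ = 1 := by
  rw [fromBlocks_conjTranspose, fromBlocks_multiply, ← fromBlocks_one, fromBlocks_inj]

end Potapov

section RCLike

variable {𝕜 : Type*} [RCLike 𝕜] {n : Type*} [Fintype n] [DecidableEq n]

open scoped ComplexOrder in
theorem isUnit_det_of_conjTranspose_mul_self_eq_one_add {a c : Matrix n n 𝕜}
    (h : aᴴ * a = 1 + cᴴ * c) : IsUnit a.det := by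
  have hpos : (aᴴ * a).PosDef := h ▸ PosDef.one.add_posSemidef (posSemidef_conjTranspose_mul_self c)
  have := (isUnit_iff_isUnit_det _).1 hpos.isUnit
  rw [det_mul, det_conjTranspose] at this
  exact isUnit_of_mul_isUnit_right this

theorem isUnit_det_of_conjTranspose_mul_indefinite_mul_eq {a b c d : Matrix n n 𝕜}
    (hg : (fromBlocks a b c d)ᴴ * fromBlocks (-1) 0 0 1 * fromBlocks a b c d =
      fromBlocks (-1) 0 0 1) : IsUnit a.det := by
  refine isUnit_det_of_conjTranspose_mul_self_eq_one_add (c := c) ?_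
  have h₁₁ := congrArg toBlocks₁₁ hg
  simp only [fromBlocks_conjTranspose, fromBlocks_multiply, mul_neg, mul_one, mul_zero, add_zero,
    zero_add, neg_mul, toBlocks_fromBlocks₁₁] at h₁₁
  rw [neg_add_eq_iff_eq_add, eq_add_neg_iff_add_eq] at h₁₁
  rw [← h₁₁, add_comm]

theorem potapov_conjTranspose_mul_self {a b c d : Matrix n n 𝕜}
    (hg : (fromBlocks a b c d)ᴴ * fromBlocks (-1) 0 0 1 * fromBlocks a b c d =
      fromBlocks (-1) 0 0 1) : (potapov a b c d)ᴴ * potapov a b c d = 1 := by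
  rw [← fromBlocks_one_zero_mul]
  exact star_mul_mul_self_eq_one_of_star_mul_self_eq
    ((conjTranspose_mul_indefinite_mul_eq_iff a b c d).1 hg)
    (fromBlocks_zero_one_mul_eq_one (isUnit_det_of_conjTranspose_mul_indefinite_mul_eq hg) b)

theorem exists_potapov_eq {α β γ δ : Matrix n n 𝕜}
    (hu : (fromBlocks α β γ δ)ᴴ * fromBlocks α β γ δ = 1) (hβ : IsUnit β.det) :
    ∃ a b c d : Matrix n n 𝕜,
      (fromBlocks a b c d)ᴴ * fromBlocks (-1) 0 0 1 * fromBlocks a b c d =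
        fromBlocks (-1) 0 0 1 ∧ fromBlocks α β γ δ = potapov a b c d := by
  refine ⟨_, _, _, _, ?_, (potapov_eq_self_of_isUnit hβ).symm⟩
  rw [conjTranspose_mul_indefinite_mul_eq_iff, ← fromBlocks_mul_fromBlocks_zero_one hβ]
  exact star_mul_mul_self_of_star_mul_self_eq_one hu _

theorem l2_opNorm_lt_one_iff_det_ne_zero {X Y : Matrix n n 𝕜} (h : Xᴴ * X + Yᴴ * Y = 1) :
    ‖X‖ < 1 ↔ Y.det ≠ 0 := by
  set T := toEuclideanCLM (𝕜 := 𝕜) X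
  set S := toEuclideanCLM (𝕜 := 𝕜) Y
  have hTS : star T * T + star S * S = 1 := by
    rw [← map_one (toEuclideanCLM (𝕜 := 𝕜)), ← h, map_add, map_mul, map_mul,
      ← star_eq_conjTranspose, ← star_eq_conjTranspose, map_star, map_star]
  have hS : ⇑S = WithLp.toLp 2 ∘ Y.mulVec ∘ WithLp.ofLp := rfl
  rw [cstar_norm_def,
    ContinuousLinearMap.opNorm_lt_one_iff_injective_of_adjoint_comp_add_adjoint_comp hTS, hS,
    Function.Injective.of_comp_iff (WithLp.toLp_injective 2),
    Function.Injective.of_comp_iff' _ (WithLp.ofLp_bijective 2), mulVec_injective_iff_isUnit,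
    isUnit_iff_isUnit_det, isUnit_iff_ne_zero]

end RCLike

end Matrix

/-- `Π(U(n,n))` consists of the unitary `2n×2n` matrices `[[α,β],[γ,δ]]` with
`det β ≠ 0`; moreover, for a unitary block matrix the conditions `det β ≠ 0`,
`det γ ≠ 0`, `‖α‖ < 1` and `‖δ‖ < 1` are all equivalent. -/
theorem stmt13 (n : ℕ) (I' : Matrix (Fin n ⊕ Fin n) (Fin n ⊕ Fin n) ℂ)
    (hI : I' = Matrix.fromBlocks (-1) 0 0 1) :
    ({r : Matrix (Fin n ⊕ Fin n) (Fin n ⊕ Fin n) ℂ |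
        ∃ a b c d : Matrix (Fin n) (Fin n) ℂ,
          (Matrix.fromBlocks a b c d)ᴴ * I' * Matrix.fromBlocks a b c d = I' ∧
          r = Matrix.fromBlocks (-(a⁻¹ * b)) a⁻¹ (d - c * a⁻¹ * b) (c * a⁻¹)} =
      {r : Matrix (Fin n ⊕ Fin n) (Fin n ⊕ Fin n) ℂ |
        ∃ α β γ δ : Matrix (Fin n) (Fin n) ℂ,
          r = Matrix.fromBlocks α β γ δ ∧ rᴴ * r = 1 ∧ β.det ≠ 0}) ∧
    (∀ α β γ δ : Matrix (Fin n) (Fin n) ℂ,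
      (Matrix.fromBlocks α β γ δ)ᴴ * Matrix.fromBlocks α β γ δ = 1 →
        ((β.det ≠ 0 ↔ γ.det ≠ 0) ∧ (β.det ≠ 0 ↔ ‖α‖ < 1) ∧
          (β.det ≠ 0 ↔ ‖δ‖ < 1))) := by
  subst hI
  refine ⟨Set.ext fun r => ⟨?_, ?_⟩, fun α β γ δ hu => ?_⟩
  · rintro ⟨a, b, c, d, hg, rfl⟩
    exact ⟨_, _, _, _, rfl, potapov_conjTranspose_mul_self hg,
      (isUnit_nonsing_inv_det _ (isUnit_det_of_conjTranspose_mul_indefinite_mul_eq hg)).ne_zero⟩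
  · rintro ⟨α, β, γ, δ, rfl, hu, hβ⟩
    exact exists_potapov_eq hu hβ.isUnit
  obtain ⟨hαγ, -, -, hβδ⟩ := fromBlocks_conjTranspose_mul_self_eq_one_iff.1 hu
  have hrows : (fromBlocks αᴴ γᴴ βᴴ δᴴ)ᴴ * fromBlocks αᴴ γᴴ βᴴ δᴴ = 1 := by
    rw [← fromBlocks_conjTranspose, conjTranspose_conjTranspose]
    exact mul_eq_one_comm.1 hu
  obtain ⟨hαβ, -⟩ := fromBlocks_conjTranspose_mul_self_eq_one_iff.1 hrows
  have hα : ‖α‖ < 1 ↔ β.det ≠ 0 := by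
    simpa only [conjTranspose_conjTranspose, l2_opNorm_conjTranspose, det_conjTranspose,
      star_ne_zero] using l2_opNorm_lt_one_iff_det_ne_zero hαβ
  have hδ : ‖δ‖ < 1 ↔ β.det ≠ 0 := l2_opNorm_lt_one_iff_det_ne_zero ((add_comm _ _).trans hβδ)
  exact ⟨hα.symm.trans (l2_opNorm_lt_one_iff_det_ne_zero hαγ), hα.symm, hδ.symm⟩
end

section
/- If [[α,β],[γ,δ]] ∈ Mat(2n,ℂ) written in n×n blocks satisfies ‖[[α,β],[γ,δ]]‖ ≤ 1 and det β ≠ 0, then ‖α‖ < 1 and ‖δ‖ < 1. -/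
open Matrix
open scoped Matrix.Norms.L2Operator

/-!
Testing `‖M‖ ≤ 1` on vectors supported on the second block column of `M = [[α, β], [γ, δ]]`
gives `‖β y‖² + ‖δ y‖² ≤ ‖y‖²`. As `β` is invertible it is bounded below, `c ‖y‖ ≤ ‖β y‖` with
`c > 0`, hence `‖δ y‖² ≤ (1 - c²) ‖y‖²` and `‖δ‖ < 1`. The same argument applied to the first
block column of `Mᴴ = [[αᴴ, γᴴ], [βᴴ, δᴴ]]` gives `‖α‖ = ‖αᴴ‖ < 1`.
-/

open WithLp

theorem ContinuousLinearMap.opNorm_lt_one_of_norm_sq_add_norm_sq_le {𝕜 E F G : Type*}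
    [NontriviallyNormedField 𝕜] [SeminormedAddCommGroup E] [NormedSpace 𝕜 E]
    [SeminormedAddCommGroup F] [NormedSpace 𝕜 F] [SeminormedAddCommGroup G]
    {A : E →L[𝕜] F} {B : E → G} {c : ℝ} (hc : 0 < c) (hB : ∀ x, c * ‖x‖ ≤ ‖B x‖)
    (hAB : ∀ x, ‖A x‖ ^ 2 + ‖B x‖ ^ 2 ≤ ‖x‖ ^ 2) : ‖A‖ < 1 := by
  have hA : ∀ x, ‖A x‖ ≤ √(1 - c ^ 2) * ‖x‖ := fun x ↦ by
    have hBx : (c * ‖x‖) ^ 2 ≤ ‖B x‖ ^ 2 := pow_le_pow_left₀ (by positivity) (hB x) 2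
    rw [← Real.sqrt_sq (norm_nonneg x), ← Real.sqrt_mul' _ (sq_nonneg _)]
    exact (le_abs_self _).trans (Real.abs_le_sqrt (by nlinarith [hAB x]))
  calc ‖A‖ ≤ √(1 - c ^ 2) := A.opNorm_le_bound (Real.sqrt_nonneg _) hA
    _ < 1 := by rw [Real.sqrt_lt' one_pos]; nlinarith

theorem EuclideanSpace.norm_sq_toLp_sumElim {𝕜 m n : Type*} [RCLike 𝕜] [Fintype m] [Fintype n]
    (u : m → 𝕜) (v : n → 𝕜) :
    ‖toLp 2 (Sum.elim u v)‖ ^ 2 = ‖toLp 2 u‖ ^ 2 + ‖toLp 2 v‖ ^ 2 := by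
  simp [EuclideanSpace.norm_sq_eq, Fintype.sum_sum_type]

namespace Matrix

variable {𝕜 : Type*} [RCLike 𝕜] {l m n o : Type*} [Fintype l] [Fintype m] [Fintype n]
  [Fintype o] [DecidableEq l] [DecidableEq o]

theorem norm_sq_add_norm_sq_fromBlocks_mulVec_le {A : Matrix m l 𝕜} {B : Matrix m o 𝕜}
    {C : Matrix n l 𝕜} {D : Matrix n o 𝕜} (h : ‖fromBlocks A B C D‖ ≤ 1) (x : l → 𝕜)
    (y : o → 𝕜) :
    ‖toLp 2 (A *ᵥ x + B *ᵥ y)‖ ^ 2 + ‖toLp 2 (C *ᵥ x + D *ᵥ y)‖ ^ 2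
      ≤ ‖toLp 2 x‖ ^ 2 + ‖toLp 2 y‖ ^ 2 := by
  have hM : fromBlocks A B C D *ᵥ Sum.elim x y
      = Sum.elim (A *ᵥ x + B *ᵥ y) (C *ᵥ x + D *ᵥ y) := by
    simp [fromBlocks_mulVec]
  rw [← EuclideanSpace.norm_sq_toLp_sumElim, ← EuclideanSpace.norm_sq_toLp_sumElim, ← hM]
  have hle := (l2_opNorm_mulVec _ (toLp 2 (Sum.elim x y))).trans
    (mul_le_of_le_one_left (norm_nonneg _) h)
  exact pow_le_pow_left₀ (norm_nonneg _) hle 2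

theorem l2_opNorm_lt_one_of_injective_mulVec {P : Matrix m l 𝕜} {Q : Matrix n l 𝕜}
    (hQ : Function.Injective Q.mulVec)
    (h : ∀ x, ‖toLp 2 (P *ᵥ x)‖ ^ 2 + ‖toLp 2 (Q *ᵥ x)‖ ^ 2 ≤ ‖toLp 2 x‖ ^ 2) : ‖P‖ < 1 := by
  have hQ' : Function.Injective (toEuclideanLin (𝕜 := 𝕜) Q) :=
    (toLp_injective 2).comp (hQ.comp (ofLp_injective 2))
  obtain ⟨c, hc, hcQ⟩ := antilipschitzWith_iff_exists_mul_le_norm.mp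
    (((toEuclideanLin Q).injective_iff_antilipschitz.mp hQ').imp fun _ ↦ And.right)
  exact ContinuousLinearMap.opNorm_lt_one_of_norm_sq_add_norm_sq_le hc hcQ fun x ↦ h (ofLp x)

end Matrix

/-- If `‖[[α,β],[γ,δ]]‖ ≤ 1` (operator norm) and `det β ≠ 0`, then `‖α‖ < 1`
and `‖δ‖ < 1`. -/
theorem stmt14 (n : ℕ) (α β γ δ : Matrix (Fin n) (Fin n) ℂ)
    (hnorm : ‖Matrix.fromBlocks α β γ δ‖ ≤ 1) (hβ : β.det ≠ 0) :
    ‖α‖ < 1 ∧ ‖δ‖ < 1 := by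
  have hβ_unit : IsUnit β := (isUnit_iff_isUnit_det β).mpr hβ.isUnit
  have hβH_unit : IsUnit βᴴ := hβ_unit.star
  have hnormH : ‖fromBlocks αᴴ γᴴ βᴴ δᴴ‖ ≤ 1 := by
    rwa [← fromBlocks_conjTranspose, l2_opNorm_conjTranspose]
  constructor
  · rw [← l2_opNorm_conjTranspose α]
    refine l2_opNorm_lt_one_of_injective_mulVec
      (mulVec_injective_iff_isUnit.mpr hβH_unit) fun x ↦ ?_
    simpa using norm_sq_add_norm_sq_fromBlocks_mulVec_le hnormH x 0
  · refine l2_opNorm_lt_one_of_injective_mulVec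
      (mulVec_injective_iff_isUnit.mpr hβ_unit) fun y ↦ ?_
    simpa [add_comm] using norm_sq_add_norm_sq_fromBlocks_mulVec_le hnorm 0 y
end
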